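/- The assignment F with F(x̄,i) = x̄ on objects and F(a,x̄,i,j) = (a+x, x̄) on morphisms (where x ∈ {0,…,m−1} is the representative of x̄) is a functor from C_m to D_m which preserves identities and composition, is surjective on objects, and is full (every morphism (α,x̄) : x̄ → ȳ of D_m is the image under F of some morphism of C_m). -/
import Mathlib


/-- A (potential) morphism `(α, x̄)` of the category `D_m`: it goes from the
object `x̄` to the object `ᾱ` (the unique `ȳ` with `α ≡ y (mod m)`). -/
structure DmMor (m : ℕ) where
  a : ℤ
  x : ZMod m
deriving DecidableEq

/-- `(α, x̄)` really is a morphism of `D_m`: `α ≥ x`, where `x ∈ {0,…,m-1}` is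
the canonical representative of `x̄`. -/
def DmValid (m : ℕ) (f : DmMor m) : Prop := (f.x.val : ℤ) ≤ f.a

/-- The target object of a morphism `(α, x̄)` of `D_m`: the residue class of `α`. -/
def DmTgt (m : ℕ) (f : DmMor m) : ZMod m := (f.a : ZMod m)

/-- `g` may be composed after `f` (target of `f` = source of `g`). -/
def DmComposable (m : ℕ) (f g : DmMor m) : Prop := g.x = (f.a : ZMod m)

/-- The composite `g ∘ f` in `D_m`: `(β, ȳ) ∘ (α, x̄) = (β - y + α, x̄)`, where
`y ∈ {0,…,m-1}` is the canonical representative of `ȳ`. -/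
def DmComp (m : ℕ) (g f : DmMor m) : DmMor m :=
  ⟨g.a - (g.x.val : ℤ) + f.a, f.x⟩

/-- The identity morphism `(x, x̄)` of the object `x̄` of `D_m`, where
`x ∈ {0,…,m-1}` is the canonical representative of `x̄`. -/
def DmId (m : ℕ) (x : ZMod m) : DmMor m := ⟨(x.val : ℤ), x⟩

/-- A (potential) morphism `(a, x̄, i, j)` of the category `C_m`:
it goes from the object `(x̄, i)` to the object `(x̄ + ā, j)`. -/
structure CmMor (m : ℕ) where
  a : ℤ
  x : ZMod m
  i : ℤ
  j : ℤ
deriving DecidableEq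

/-- `(a, x̄, i, j)` really is a morphism of `C_m`. -/
def CmValid (m : ℕ) (f : CmMor m) : Prop :=
  f.i ≤ 0 ∧ f.j ≤ 0 ∧ 0 ≤ f.a ∧ f.a ≤ f.i - f.j

/-- The source object of a morphism of `C_m`. -/
def CmSrc (m : ℕ) (f : CmMor m) : ZMod m × ℤ := (f.x, f.i)

/-- The target object of a morphism of `C_m`. -/
def CmTgt (m : ℕ) (f : CmMor m) : ZMod m × ℤ := (f.x + (f.a : ZMod m), f.j)

/-- `g` may be composed after `f`. -/
def CmComposable (m : ℕ) (f g : CmMor m) : Prop :=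
  g.x = f.x + (f.a : ZMod m) ∧ g.i = f.j

/-- The composite `g ∘ f` in `C_m`. -/
def CmComp (m : ℕ) (g f : CmMor m) : CmMor m :=
  ⟨f.a + g.a, f.x, f.i, g.j⟩

/-- The identity morphism `(0, x̄, i, i)` of the object `(x̄, i)` of `C_m`. -/
def CmId (m : ℕ) (x : ZMod m) (i : ℤ) : CmMor m := ⟨0, x, i, i⟩

/-- The functor `F : C_m → D_m` on objects: `F(x̄, i) = x̄`. -/
def Fobj (m : ℕ) (X : ZMod m × ℤ) : ZMod m := X.1

/-- The functor `F : C_m → D_m` on morphisms: `F(a, x̄, i, j) = (a + x, x̄)`,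
where `x ∈ {0,…,m-1}` is the canonical representative of `x̄`. -/
def Fmor (m : ℕ) (f : CmMor m) : DmMor m := ⟨f.a + (f.x.val : ℤ), f.x⟩

/-- `F` is a functor from `C_m` to `D_m`: it sends morphisms to morphisms
(with the correct source and target), preserves identities and composition;
moreover it is surjective on objects and full (surjective on morphisms). -/
theorem stmt12 (m : ℕ) (hm : 1 < m) :
    (∀ f : CmMor m, CmValid m f → DmValid m (Fmor m f) ∧
      (Fmor m f).x = Fobj m (CmSrc m f) ∧
      DmTgt m (Fmor m f) = Fobj m (CmTgt m f)) ∧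
    (∀ (x : ZMod m) (i : ℤ), i ≤ 0 → Fmor m (CmId m x i) = DmId m x) ∧
    (∀ f g : CmMor m, CmValid m f → CmValid m g → CmComposable m f g →
      DmComposable m (Fmor m f) (Fmor m g) ∧
      Fmor m (CmComp m g f) = DmComp m (Fmor m g) (Fmor m f)) ∧
    (∀ y : ZMod m, ∃ X : ZMod m × ℤ, X.2 ≤ 0 ∧ Fobj m X = y) ∧
    (∀ g : DmMor m, DmValid m g → ∃ f : CmMor m, CmValid m f ∧ Fmor m f = g) := by
  haveI : NeZero m := ⟨by omega⟩
  refine ⟨?_, ?_, ?_, ?_, ?_⟩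
  · rintro f ⟨hi, hj, ha, hab⟩
    refine ⟨by simpa [DmValid, Fmor] using ha, rfl, ?_⟩
    push_cast [DmTgt, Fmor, Fobj, CmTgt, ZMod.natCast_val, ZMod.cast_id]
    ring
  · intro x i _
    simp [Fmor, CmId, DmId]
  · rintro f g ⟨hfi, hfj, hfa, hfab⟩ ⟨hgi, hgj, hga, hgab⟩ ⟨hc1, hc2⟩
    constructor
    · push_cast [DmComposable, Fmor, hc1, ZMod.natCast_val, ZMod.cast_id]
      ring
    · simp only [Fmor, CmComp, DmComp]
      congr 1
      ring
  · intro y; exact ⟨(y, 0), le_refl 0, rfl⟩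
  · rintro g hg
    refine ⟨⟨g.a - (g.x.val : ℤ), g.x, 0, -(g.a - (g.x.val : ℤ))⟩, ⟨le_refl 0, ?_, ?_, by simp⟩, ?_⟩
    · simpa using sub_nonneg.mpr hg
    · exact sub_nonneg.mpr hg
    · simp [Fmor]
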